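/- For all integers n ≥ 1 and m ≥ 2, the number of fuzzy bitopological spaces on an n-element set X with membership values in an m-element chain M in which both fuzzy topologies have exactly 4 open sets is (τᵢ, τⱼ)_F(n, m, 4) = T(T+1)/2, where T = (m(m+1)/2)^n − 3·m^n + 2^(n−1) + 2. -/

import Mathlib

/-- A fuzzy topology on `Fin n` with membership values in the `m`-element chain `Fin m`:
a collection of fuzzy sets (functions `Fin n → Fin m`) containing the constant function
with the least value, the constant function with the greatest value, and closed under
pointwise (binary) supremum and infimum. -/
def IsFuzzyTopology {n m : ℕ} (hm : m ≠ 0) (τ : Finset (Fin n → Fin m)) : Prop :=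
  (fun _ => (⟨0, Nat.pos_of_ne_zero hm⟩ : Fin m)) ∈ τ ∧
  (fun _ => (⟨m - 1, by omega⟩ : Fin m)) ∈ τ ∧
  (∀ f ∈ τ, ∀ g ∈ τ, f ⊔ g ∈ τ) ∧
  (∀ f ∈ τ, ∀ g ∈ τ, f ⊓ g ∈ τ)

/-- `tauF n m k hm` is the number of fuzzy topologies on an `n`-element set with values in an
`m`-element chain having exactly `k` open sets. -/
noncomputable def tauF (n m k : ℕ) (hm : m ≠ 0) : ℕ :=
  Nat.card {τ : Finset (Fin n → Fin m) // IsFuzzyTopology hm τ ∧ τ.card = k}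

/-- `biTauF n m k hm` is the number of fuzzy bitopological spaces (unordered pairs of fuzzy
topologies, allowing equal ones) on an `n`-element set with values in an `m`-element chain in
which both topologies have exactly `k` open sets. -/
noncomputable def biTauF (n m k : ℕ) (hm : m ≠ 0) : ℕ :=
  Nat.card (Sym2 {τ : Finset (Fin n → Fin m) // IsFuzzyTopology hm τ ∧ τ.card = k})

/-! A four-element bounded sublattice of a bounded lattice `α` is `{⊥, a, b, ⊤}`, where either
`⊥ < a < b < ⊤` or `a` and `b` are complements of each other, and it arises from exactly two
ordered pairs `(a, b)`. Counting these pairs gives `2 T + 6 N = 2 L + C + 4`, where `T` is the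
number of such sublattices, `N = |α|`, `L = #{a ≤ b}` and `C = #{IsCompl a b}`. For the lattice
`Fin n → Fin m` of fuzzy sets, `N`, `L` and `C` are the `n`-th powers of their values `m`,
`m (m + 1) / 2` and `2` on the chain `Fin m`; and `T` objects form `T (T + 1) / 2` unordered pairs.
-/

open Finset

lemma isSublattice_of_total {α : Type*} [Lattice α] {s : Set α}
    (h : ∀ x ∈ s, ∀ y ∈ s, x ≤ y ∨ y ≤ x) :
    IsSublattice s where
  supClosed x hx y hy := by
    rcases h x hx y hy with hxy | hxy
    · rwa [sup_eq_right.2 hxy]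
    · rwa [sup_eq_left.2 hxy]
  infClosed x hx y hy := by
    rcases h x hx y hy with hxy | hxy
    · rwa [inf_eq_left.2 hxy]
    · rwa [inf_eq_right.2 hxy]

section BoundedLattice

variable {α : Type*} [Lattice α] [BoundedOrder α]

def IsBoundedSublattice (τ : Finset α) : Prop :=
  ⊥ ∈ τ ∧ ⊤ ∈ τ ∧ IsSublattice (τ : Set α)

def IsQuadPair (a b : α) : Prop :=
  (⊥ < a ∧ a < b ∧ b < ⊤) ∨ (⊥ < b ∧ b < a ∧ a < ⊤) ∨ (IsCompl a b ∧ a ≠ ⊥ ∧ a ≠ ⊤)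

lemma isQuadPair_iff {a b : α} : IsQuadPair a b ↔
    a ≠ b ∧ a ≠ ⊥ ∧ a ≠ ⊤ ∧ b ≠ ⊥ ∧ b ≠ ⊤ ∧ (a ≤ b ∨ b ≤ a ∨ IsCompl a b) := by
  simp only [IsQuadPair, bot_lt_iff_ne_bot, lt_top_iff_ne_top]
  constructor
  · rintro (⟨ha, hab, hb⟩ | ⟨hb, hba, ha⟩ | ⟨h, ha, ha'⟩)
    · exact ⟨hab.ne, ha, (hab.trans_le le_top).ne, (bot_le.trans_lt hab).ne', hb, Or.inl hab.le⟩
    · exact ⟨hba.ne', (bot_le.trans_lt hba).ne', ha, hb, (hba.trans_le le_top).ne,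
        Or.inr (Or.inl hba.le)⟩
    · refine ⟨fun hab => ha ?_, ha, ha', fun hb => ha' ?_, fun hb => ha ?_, Or.inr (Or.inr h)⟩
      · simpa [hab] using h.inf_eq_bot
      · exact eq_top_of_isCompl_bot (hb ▸ h)
      · exact eq_bot_of_isCompl_top (hb ▸ h)
  · rintro ⟨hab, ha, ha', hb, hb', hab' | hba | h⟩
    · exact Or.inl ⟨ha, hab'.lt_of_ne hab, hb'⟩
    · exact Or.inr (Or.inl ⟨hb, hba.lt_of_ne hab.symm, ha'⟩)
    · exact Or.inr (Or.inr ⟨h, ha, ha'⟩)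

lemma IsQuadPair.symm {a b : α} (h : IsQuadPair a b) : IsQuadPair b a := by
  obtain ⟨hab, ha, ha', hb, hb', hrel⟩ := isQuadPair_iff.1 h
  refine isQuadPair_iff.2 ⟨hab.symm, hb, hb', ha, ha', ?_⟩
  rcases hrel with h | h | h
  exacts [Or.inr (Or.inl h), Or.inl h, Or.inr (Or.inr h.symm)]

variable [DecidableEq α]

lemma isSublattice_quad_of_le {a b : α} (hab : a ≤ b) :
    IsSublattice (({⊥, a, b, ⊤} : Finset α) : Set α) := by
  refine isSublattice_of_total ?_
  simp only [coe_insert, coe_singleton, Set.mem_insert_iff, Set.mem_singleton_iff]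
  rintro x (rfl | rfl | rfl | rfl) y (rfl | rfl | rfl | rfl) <;> simp [hab]

lemma isSublattice_quad_of_isCompl {a b : α} (hab : IsCompl a b) :
    IsSublattice (({⊥, a, b, ⊤} : Finset α) : Set α) := by
  have hba := hab.symm
  constructor <;>
  · simp only [coe_insert, coe_singleton]
    rintro x (rfl | rfl | rfl | rfl) y (rfl | rfl | rfl | rfl) <;>
      simp [hab.sup_eq_top, hab.inf_eq_bot, hba.sup_eq_top, hba.inf_eq_bot]

lemma isSublattice_quad_iff {a b : α} (ha : a ≠ ⊥) (ha' : a ≠ ⊤) :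
    IsSublattice (({⊥, a, b, ⊤} : Finset α) : Set α) ↔ a ≤ b ∨ b ≤ a ∨ IsCompl a b := by
  constructor
  · rintro ⟨hsup, hinf⟩
    by_contra! h
    obtain ⟨hab, hba, hcompl⟩ := h
    have hs : a ⊔ b ∈ ({⊥, a, b, ⊤} : Finset α) := hsup (by simp) (by simp)
    have hi : a ⊓ b ∈ ({⊥, a, b, ⊤} : Finset α) := hinf (by simp) (by simp)
    simp only [mem_insert, mem_singleton, sup_eq_left, sup_eq_right, inf_eq_left,
      inf_eq_right, sup_eq_bot_iff, inf_eq_top_iff, hab, hba, ha, ha', false_or, or_false,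
      false_and] at hs hi
    exact hcompl (IsCompl.of_eq hi hs)
  · rintro (hab | hba | hab)
    · exact isSublattice_quad_of_le hab
    · rw [insert_comm a b]
      exact isSublattice_quad_of_le hba
    · exact isSublattice_quad_of_isCompl hab

lemma quad_eq_quad_iff {a b c d : α} (h₁ : IsQuadPair a b) (h₂ : IsQuadPair c d) :
    ({⊥, c, d, ⊤} : Finset α) = {⊥, a, b, ⊤} ↔ (c, d) = (a, b) ∨ (c, d) = (b, a) := by
  obtain ⟨hab, ha, ha', hb, hb', -⟩ := isQuadPair_iff.1 h₁
  obtain ⟨hcd, hc, hc', hd, hd', -⟩ := isQuadPair_iff.1 h₂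
  constructor
  · intro h
    have hc_mem : c ∈ ({⊥, a, b, ⊤} : Finset α) := h ▸ by simp
    have hd_mem : d ∈ ({⊥, a, b, ⊤} : Finset α) := h ▸ by simp
    simp_all only [mem_insert, mem_singleton, false_or, or_false, Prod.mk.injEq]
    rcases hc_mem with rfl | rfl <;> rcases hd_mem with rfl | rfl <;> simp_all
  · rintro (h | h) <;> simp only [Prod.mk.injEq] at h <;> obtain ⟨rfl, rfl⟩ := h
    · rfl
    · rw [insert_comm c d]

variable [Nontrivial α]

lemma eq_quad_of_card_eq_four {τ : Finset α} (hbot : ⊥ ∈ τ) (htop : ⊤ ∈ τ) (hcard : #τ = 4) :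
    ∃ a b, a ≠ b ∧ a ≠ ⊥ ∧ a ≠ ⊤ ∧ b ≠ ⊥ ∧ b ≠ ⊤ ∧ τ = {⊥, a, b, ⊤} := by
  have htop' : ⊤ ∈ τ.erase ⊥ := mem_erase.2 ⟨top_ne_bot, htop⟩
  have hcard' : #((τ.erase ⊥).erase ⊤) = 2 := by
    rw [card_erase_of_mem htop', card_erase_of_mem hbot, hcard]
  obtain ⟨a, b, hab, hτ⟩ := card_eq_two.1 hcard'
  have ha : a ∈ (τ.erase ⊥).erase ⊤ := by simp [hτ]
  have hb : b ∈ (τ.erase ⊥).erase ⊤ := by simp [hτ]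
  simp only [mem_erase] at ha hb
  refine ⟨a, b, hab, ha.2.1, ha.1, hb.2.1, hb.1, ?_⟩
  rw [← insert_erase hbot, ← insert_erase htop', hτ]
  ext x
  simp only [mem_insert, mem_singleton]
  tauto

lemma isBoundedSublattice_and_card_eq_four_iff {τ : Finset α} :
    IsBoundedSublattice τ ∧ #τ = 4 ↔ ∃ a b, IsQuadPair a b ∧ τ = {⊥, a, b, ⊤} := by
  constructor
  · rintro ⟨⟨hbot, htop, hτ⟩, hcard⟩
    obtain ⟨a, b, hab, ha, ha', hb, hb', rfl⟩ := eq_quad_of_card_eq_four hbot htop hcard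
    exact ⟨a, b, isQuadPair_iff.2 ⟨hab, ha, ha', hb, hb', (isSublattice_quad_iff ha ha').1 hτ⟩, rfl⟩
  · rintro ⟨a, b, h, rfl⟩
    obtain ⟨hab, ha, ha', hb, hb', hrel⟩ := isQuadPair_iff.1 h
    refine ⟨⟨by simp, by simp, (isSublattice_quad_iff ha ha').2 hrel⟩, ?_⟩
    rw [card_insert_of_notMem (by simp [ha.symm, hb.symm]),
      card_insert_of_notMem (by simp [hab, ha']), card_pair hb']

end BoundedLattice

section StrictChains

open Classical

variable {α : Type*} [Fintype α]

lemma card_filter_fst_eq_snd : #{p : α × α | p.1 = p.2} = Fintype.card α := by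
  rw [← card_univ, ← card_image_of_injective univ (fun a b h => congrArg Prod.fst h :
    Function.Injective fun a : α => (a, a))]
  congr 1; ext ⟨a, b⟩; simp [eq_comm]

lemma card_filter_le_eq_add [PartialOrder α] :
    #{p : α × α | p.1 ≤ p.2} = #{p : α × α | p.1 = p.2} + #{p : α × α | p.1 < p.2} := by
  rw [← card_union_of_disjoint (disjoint_filter.2 fun p _ h h' => h'.ne h), ← filter_or]
  congr 1; ext p; simp [le_iff_eq_or_lt]

variable [PartialOrder α] [BoundedOrder α]

lemma card_filter_lt_eq_add :
    #{p : α × α | p.1 < p.2} =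
      #{p : α × α | p.1 = ⊥ ∧ ⊥ < p.2} + #{p : α × α | ⊥ < p.1 ∧ p.1 < p.2} := by
  rw [← card_union_of_disjoint (disjoint_filter.2 fun p _ h h' => h'.1.ne' h.1), ← filter_or]
  congr 1; ext ⟨a, b⟩
  simp only [mem_filter, mem_univ, true_and]
  rcases eq_bot_or_bot_lt a with rfl | ha
  · simp
  · simp [ha, ha.ne']

lemma card_filter_bot_lt_lt_eq_add :
    #{p : α × α | ⊥ < p.1 ∧ p.1 < p.2} =
      #{p : α × α | ⊥ < p.1 ∧ p.1 < ⊤ ∧ p.2 = ⊤} +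
        #{p : α × α | ⊥ < p.1 ∧ p.1 < p.2 ∧ p.2 < ⊤} := by
  rw [← card_union_of_disjoint (disjoint_filter.2 fun p _ h h' => h'.2.2.ne h.2.2), ← filter_or]
  congr 1; ext ⟨a, b⟩
  simp only [mem_filter, mem_univ, true_and]
  rcases eq_top_or_lt_top b with rfl | hb
  · simp
  · simp [hb, hb.ne]

lemma card_filter_fst_eq_bot : #{p : α × α | p.1 = ⊥ ∧ ⊥ < p.2} = Fintype.card α - 1 := by
  rw [← card_univ, ← card_erase_of_mem (mem_univ ⊥), ← card_image_of_injective _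
    (fun a b h => congrArg Prod.snd h : Function.Injective fun b : α => ((⊥ : α), b))]
  congr 1; ext ⟨a, b⟩; simp [bot_lt_iff_ne_bot, eq_comm, and_comm]

lemma card_filter_snd_eq_top [Nontrivial α] :
    #{p : α × α | ⊥ < p.1 ∧ p.1 < ⊤ ∧ p.2 = ⊤} = Fintype.card α - 2 := by
  rw [← card_univ, ← card_pair (bot_ne_top : (⊥ : α) ≠ ⊤), ← card_sdiff_of_subset (subset_univ _),
    ← card_image_of_injective _
      (fun a b h => congrArg Prod.fst h : Function.Injective fun a : α => (a, (⊤ : α)))]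
  congr 1; ext ⟨a, b⟩
  simp only [mem_filter, mem_univ, true_and, mem_image, mem_sdiff, mem_insert, mem_singleton,
    Prod.mk.injEq, bot_lt_iff_ne_bot, lt_top_iff_ne_top, not_or]
  constructor
  · rintro ⟨ha, ha', rfl⟩
    exact ⟨a, ⟨ha, ha'⟩, rfl, rfl⟩
  · rintro ⟨a, ⟨ha, ha'⟩, rfl, rfl⟩
    exact ⟨ha, ha', rfl⟩

lemma card_filter_bot_lt_lt_lt_top_add [Nontrivial α] :
    #{p : α × α | ⊥ < p.1 ∧ p.1 < p.2 ∧ p.2 < ⊤} + 3 * Fintype.card α =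
      #{p : α × α | p.1 ≤ p.2} + 3 := by
  have := Fintype.one_lt_card (α := α)
  rw [card_filter_le_eq_add, card_filter_lt_eq_add, card_filter_bot_lt_lt_eq_add, card_filter_fst_eq_snd,
    card_filter_fst_eq_bot, card_filter_snd_eq_top]
  omega

end StrictChains

section QuadPairs

open Classical

variable {α : Type*} [Fintype α] [Lattice α] [BoundedOrder α]

lemma card_filter_isCompl_ne_bot_ne_top_add [Nontrivial α] :
    #{p : α × α | IsCompl p.1 p.2 ∧ p.1 ≠ ⊥ ∧ p.1 ≠ ⊤} + 2 = #{p : α × α | IsCompl p.1 p.2} := by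
  have hne : ((⊥, ⊤) : α × α) ≠ (⊤, ⊥) := by simp
  rw [← card_pair hne, ← card_union_of_disjoint (by simp)]
  congr 1; ext ⟨a, b⟩
  simp only [mem_union, mem_filter, mem_univ, true_and, mem_insert, mem_singleton, Prod.mk.injEq]
  constructor
  · rintro (⟨h, -⟩ | ⟨rfl, rfl⟩ | ⟨rfl, rfl⟩)
    exacts [h, isCompl_bot_top, isCompl_top_bot]
  · intro h
    rcases eq_or_ne a ⊥ with rfl | ha
    · exact Or.inr (Or.inl ⟨rfl, eq_top_of_bot_isCompl h⟩)
    rcases eq_or_ne a ⊤ with rfl | ha'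
    · exact Or.inr (Or.inr ⟨rfl, eq_bot_of_top_isCompl h⟩)
    exact Or.inl ⟨h, ha, ha'⟩

lemma card_filter_isQuadPair :
    #{p : α × α | IsQuadPair p.1 p.2} =
      2 * #{p : α × α | ⊥ < p.1 ∧ p.1 < p.2 ∧ p.2 < ⊤} +
        #{p : α × α | IsCompl p.1 p.2 ∧ p.1 ≠ ⊥ ∧ p.1 ≠ ⊤} := by
  have hswap : #{p : α × α | ⊥ < p.2 ∧ p.2 < p.1 ∧ p.1 < ⊤} =
      #{p : α × α | ⊥ < p.1 ∧ p.1 < p.2 ∧ p.2 < ⊤} :=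
    card_equiv (Equiv.prodComm α α) fun p => by simp
  have hsplit : univ.filter (fun p : α × α => IsQuadPair p.1 p.2) =
      univ.filter (fun p : α × α => ⊥ < p.1 ∧ p.1 < p.2 ∧ p.2 < ⊤) ∪
        (univ.filter (fun p : α × α => ⊥ < p.2 ∧ p.2 < p.1 ∧ p.1 < ⊤) ∪
          univ.filter (fun p : α × α => IsCompl p.1 p.2 ∧ p.1 ≠ ⊥ ∧ p.1 ≠ ⊤)) := by
    ext p; simp only [mem_filter, mem_union, mem_univ, true_and]; rfl
  rw [hsplit, card_union_of_disjoint, card_union_of_disjoint, hswap, two_mul, add_assoc]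
  · refine disjoint_filter.2 fun p _ hba h => hba.1.ne' ?_
    simpa [inf_eq_right.2 hba.2.1.le] using h.1.inf_eq_bot
  · rw [disjoint_union_right, disjoint_filter, disjoint_filter]
    refine ⟨fun p _ hab hba => ?_, fun p _ hab h => ?_⟩
    · exact hab.2.1.not_gt hba.2.1
    · exact hab.1.ne' (by simpa [inf_eq_left.2 hab.2.1.le] using h.1.inf_eq_bot)

lemma two_mul_card_filter_boundedSublattice_four [Nontrivial α] :
    2 * #{τ : Finset α | IsBoundedSublattice τ ∧ #τ = 4} = #{p : α × α | IsQuadPair p.1 p.2} := by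
  set S := ({τ : Finset α | IsBoundedSublattice τ ∧ #τ = 4} : Finset (Finset α))
  have hmaps : ∀ p ∈ ({p : α × α | IsQuadPair p.1 p.2} : Finset (α × α)),
      ({⊥, p.1, p.2, ⊤} : Finset α) ∈ S := fun p hp => by
    simp only [S, mem_filter, mem_univ, true_and, isBoundedSublattice_and_card_eq_four_iff]
    exact ⟨p.1, p.2, (mem_filter.1 hp).2, rfl⟩
  rw [card_eq_sum_card_fiberwise hmaps, sum_const_nat (m := 2), mul_comm]
  intro τ hτ
  simp only [S, mem_filter, mem_univ, true_and, isBoundedSublattice_and_card_eq_four_iff] at hτ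
  obtain ⟨a, b, hab, rfl⟩ := hτ
  have hfiber : ({p ∈ ({p : α × α | IsQuadPair p.1 p.2} : Finset (α × α)) |
      ({⊥, p.1, p.2, ⊤} : Finset α) = {⊥, a, b, ⊤}}) = {(a, b), (b, a)} := by
    ext ⟨c, d⟩
    simp only [mem_filter, mem_univ, true_and, mem_insert, mem_singleton]
    constructor
    · rintro ⟨hcd, h⟩
      exact (quad_eq_quad_iff hab hcd).1 h
    · rintro (h | h) <;> simp only [Prod.mk.injEq] at h <;> obtain ⟨rfl, rfl⟩ := h
      · exact ⟨hab, rfl⟩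
      · exact ⟨hab.symm, (quad_eq_quad_iff hab hab.symm).2 (Or.inr rfl)⟩
  rw [hfiber, card_pair]
  exact fun h => (isQuadPair_iff.1 hab).1 (congrArg Prod.fst h)

end QuadPairs

theorem two_mul_card_boundedSublattices_four_add (α : Type*) [Lattice α] [BoundedOrder α]
    [Finite α] [Nontrivial α] :
    2 * Nat.card {τ : Finset α // IsBoundedSublattice τ ∧ #τ = 4} + 6 * Nat.card α =
      2 * Nat.card {p : α × α // p.1 ≤ p.2} + Nat.card {p : α × α // IsCompl p.1 p.2} + 4 := by
  classical
  have := Fintype.ofFinite α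
  simp only [Nat.card_eq_fintype_card, Fintype.card_subtype]
  have hchain := card_filter_bot_lt_lt_lt_top_add (α := α)
  have hcompl := card_filter_isCompl_ne_bot_ne_top_add (α := α)
  rw [two_mul_card_filter_boundedSublattice_four, card_filter_isQuadPair]
  omega

lemma card_le_pairs_of_linearOrder (α : Type*) [LinearOrder α] :
    Nat.card {p : α × α // p.1 ≤ p.2} = Nat.card α * (Nat.card α + 1) / 2 := by
  rw [← Nat.card_congr Sym2.sortEquiv, Sym2.natCard, Nat.choose_two_right, Nat.add_sub_cancel,
    Nat.mul_comm]

lemma card_isCompl_pairs_of_linearOrder (α : Type*) [LinearOrder α] [BoundedOrder α]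
    [Nontrivial α] [Finite α] :
    Nat.card {p : α × α // IsCompl p.1 p.2} = 2 := by
  classical
  have := Fintype.ofFinite α
  have hne : ((⊥, ⊤) : α × α) ≠ (⊤, ⊥) := by simp
  rw [Nat.card_eq_fintype_card, Fintype.card_subtype, ← card_pair hne]
  congr 1; ext ⟨a, b⟩
  simp only [mem_filter, mem_univ, true_and, mem_insert, mem_singleton, Prod.mk.injEq,
    isCompl_iff, disjoint_iff, codisjoint_iff, min_eq_bot, max_eq_top]
  constructor
  · rintro ⟨rfl | rfl, ha | hb⟩ <;> simp_all
  · rintro (⟨rfl, rfl⟩ | ⟨rfl, rfl⟩) <;> simp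

lemma card_pairs_forall_apply (ι β : Type*) [Finite ι] (r : β → β → Prop) :
    Nat.card {p : (ι → β) × (ι → β) // ∀ i, r (p.1 i) (p.2 i)} =
      Nat.card {q : β × β // r q.1 q.2} ^ Nat.card ι := by
  rw [← Nat.card_fun]
  exact Nat.card_congr
    { toFun p i := ⟨(p.1.1 i, p.1.2 i), p.2 i⟩
      invFun f := ⟨(fun i => (f i).1.1, fun i => (f i).1.2), fun i => (f i).2⟩
      left_inv _ := rfl
      right_inv _ := rfl }

lemma isFuzzyTopology_iff {n m : ℕ} [NeZero m] (τ : Finset (Fin n → Fin m)) :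
    IsFuzzyTopology (NeZero.ne m) τ ↔ IsBoundedSublattice τ :=
  ⟨fun ⟨hbot, htop, hsup, hinf⟩ => ⟨hbot, htop, hsup, hinf⟩,
    fun ⟨hbot, htop, hsup, hinf⟩ => ⟨hbot, htop, hsup, hinf⟩⟩

theorem tauF_four (n m : ℕ) (hm₀ : m ≠ 0) (hn : 1 ≤ n) (hm : 2 ≤ m) :
    (tauF n m 4 hm₀ : ℤ) =
      ((m * (m + 1) / 2 : ℕ) : ℤ) ^ n - 3 * (m : ℤ) ^ n + 2 ^ (n - 1) + 2 := by
  have : NeZero m := ⟨hm₀⟩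
  have : Nontrivial (Fin m) := Fin.nontrivial_iff_two_le.2 hm
  have : Nonempty (Fin n) := ⟨⟨0, hn⟩⟩
  have htau : tauF n m 4 hm₀ =
      Nat.card {τ : Finset (Fin n → Fin m) // IsBoundedSublattice τ ∧ #τ = 4} :=
    Nat.card_congr (Equiv.subtypeEquivRight fun τ => and_congr_left' (isFuzzyTopology_iff τ))
  have hle : Nat.card {p : (Fin n → Fin m) × (Fin n → Fin m) // p.1 ≤ p.2} =
      (m * (m + 1) / 2) ^ n := by
    change Nat.card {p : (Fin n → Fin m) × (Fin n → Fin m) // ∀ i, p.1 i ≤ p.2 i} = _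
    rw [card_pairs_forall_apply, card_le_pairs_of_linearOrder, Nat.card_fin, Nat.card_fin]
  have hcompl : Nat.card {p : (Fin n → Fin m) × (Fin n → Fin m) // IsCompl p.1 p.2} = 2 ^ n := by
    simp_rw [Pi.isCompl_iff]
    rw [card_pairs_forall_apply, card_isCompl_pairs_of_linearOrder, Nat.card_fin]
  have hcount := two_mul_card_boundedSublattices_four_add (Fin n → Fin m)
  rw [hle, hcompl, Nat.card_fun, Nat.card_fin, Nat.card_fin, ← htau] at hcount
  have hpow : (2 : ℤ) ^ n = 2 * 2 ^ (n - 1) := by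
    rw [← pow_succ']; congr 1; omega
  -- keeps `push_cast` from turning the cast of the ℕ-quotient into an ℤ-quotient
  generalize m * (m + 1) / 2 = P at hcount ⊢
  have := congrArg (fun k : ℕ => (k : ℤ)) hcount
  push_cast at this
  linarith

theorem biTauF_four_open_sets (n m : ℕ) (hn : 1 ≤ n) (hm : 2 ≤ m) :
    (biTauF n m 4 (by omega) : ℤ) =
      (((m * (m + 1) / 2 : ℕ) : ℤ) ^ n - 3 * (m : ℤ) ^ n + 2 ^ (n - 1) + 2) *
        ((((m * (m + 1) / 2 : ℕ) : ℤ) ^ n - 3 * (m : ℤ) ^ n + 2 ^ (n - 1) + 2) + 1) / 2 := by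
  rw [biTauF, Sym2.natCard, Nat.choose_two_right, Nat.add_sub_cancel, Nat.mul_comm,
    Int.natCast_ediv, Nat.cast_mul, Nat.cast_add_one, Nat.cast_ofNat, ← tauF,
    tauF_four n m _ hn hm]
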